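/- arXiv:1802.07006 — 4 statements merged into one kernel-verified Lean document; each statement's English description precedes it below -/
import Mathlib

section
/- Let (M, ker α) be a contact manifold with complete Reeb flow Φ, and let Ψ : D₁ → D₂ be an exact symplectic embedding between exact symplectic manifolds (D₁, dλ₁) and (D₂, dλ₂), with dH = Ψ*λ₂ − λ₁ for a smooth function H : D₁ → ℝ. Then the map φ : M × D₁ → M × D₂ given by φ(p, x) = (Φ_{−H(x)}(p), Ψ(x)) satisfies φ*(α + λ₂) = α + λ₁; in particular φ is a strict contact embedding. -/
/-- flat-chart model: Let `(M, ker α)` be a contact manifold with Reeb field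
`R` (so `α(R) = 1`, `i_R dα = 0`) and complete Reeb flow `Φ`, and let `Ψ : D₁ → D₂` be an
exact symplectic embedding with `dH = Ψ*λ₂ − λ₁`.  Then
`φ(p, x) = (Φ_{−H(x)}(p), Ψ(x))` satisfies `φ*(α + λ₂) = α + λ₁` pointwise, i.e. it is a
strict contact embedding of `(M × D₁, α + λ₁)` into `(M × D₂, α + λ₂)`. -/
theorem stmt_0
    {E F₁ F₂ : Type*} [NormedAddCommGroup E] [NormedSpace ℝ E]
    [NormedAddCommGroup F₁] [NormedSpace ℝ F₁]
    [NormedAddCommGroup F₂] [NormedSpace ℝ F₂]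
    (α : E → E →L[ℝ] ℝ) (hα : ContDiff ℝ (⊤ : ℕ∞) α)
    (lam₁ : F₁ → F₁ →L[ℝ] ℝ) (lam₂ : F₂ → F₂ →L[ℝ] ℝ)
    (hlam₁ : ContDiff ℝ (⊤ : ℕ∞) lam₁) (hlam₂ : ContDiff ℝ (⊤ : ℕ∞) lam₂)
    -- the Reeb vector field of α
    (R : E → E) (hR : ContDiff ℝ (⊤ : ℕ∞) R)
    (hReeb₁ : ∀ p, α p (R p) = 1)
    (hReeb₂ : ∀ p v, fderiv ℝ α p (R p) v - fderiv ℝ α p v (R p) = 0)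
    -- its (complete) flow
    (Φ : ℝ → E → E) (hΦsmooth : ContDiff ℝ (⊤ : ℕ∞) (Function.uncurry Φ))
    (hΦ0 : ∀ p, Φ 0 p = p)
    (hΦflow : ∀ t p, HasDerivAt (fun s => Φ s p) (R (Φ t p)) t)
    -- the exact symplectic embedding
    (Ψ : F₁ → F₂) (hΨ : ContDiff ℝ (⊤ : ℕ∞) Ψ) (hΨinj : Function.Injective Ψ)
    (H : F₁ → ℝ) (hH : ContDiff ℝ (⊤ : ℕ∞) H)
    (hexact : ∀ x, fderiv ℝ H x = (lam₂ (Ψ x)).comp (fderiv ℝ Ψ x) - lam₁ x) :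
    ∀ (p : E) (x : F₁) (v : E × F₁),
      α (Φ (-(H x)) p) (fderiv ℝ (fun q : E × F₁ => Φ (-(H q.2)) q.1) (p, x) v)
        + lam₂ (Ψ x) (fderiv ℝ Ψ x v.2)
      = α p v.1 + lam₁ x v.2 := by
  classical
  set F : ℝ × E → E := Function.uncurry Φ with hFdef
  have hFd : Differentiable ℝ F := hΦsmooth.differentiable (by simp)
  have hA : ∀ z : ℝ × E, HasFDerivAt F (fderiv ℝ F z) z := fun z => (hFd z).hasFDerivAt
  have hA' : ContDiff ℝ (⊤ : ℕ∞) (fderiv ℝ F) := hΦsmooth.fderiv_right (by simp)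
  have hAd : ∀ z : ℝ × E, HasFDerivAt (fderiv ℝ F) (fderiv ℝ (fderiv ℝ F) z) z :=
    fun z => ((hA'.differentiable (by simp)) z).hasFDerivAt
  -- the time-partial derivative of the flow is the Reeb field
  have hBt : ∀ (t : ℝ) (q : E), fderiv ℝ F (t, q) (1, 0) = R (Φ t q) := by
    intro t q
    have hc : HasDerivAt (fun s : ℝ => ((s, q) : ℝ × E)) ((1 : ℝ), (0 : E)) t :=
      (hasDerivAt_id t).prodMk (hasDerivAt_const t q)
    have h1 : HasDerivAt (fun s => Φ s q) (fderiv ℝ F (t, q) (1, 0)) t :=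
      by have := (hA (t, q)).comp_hasDerivAt t hc; exact this
    exact h1.unique (hΦflow t q)
  -- variational equation
  have hw : ∀ (t : ℝ) (q : E) (u : E),
      HasDerivAt (fun s => fderiv ℝ F (s, q) (0, u))
        (fderiv ℝ R (Φ t q) (fderiv ℝ F (t, q) (0, u))) t := by
    intro t q u
    have hc : HasDerivAt (fun s : ℝ => ((s, q) : ℝ × E)) ((1 : ℝ), (0 : E)) t :=
      (hasDerivAt_id t).prodMk (hasDerivAt_const t q)
    have h1 : HasDerivAt (fun s => fderiv ℝ F (s, q)) (fderiv ℝ (fderiv ℝ F) (t, q) (1, 0)) t :=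
      (hAd (t, q)).comp_hasDerivAt t hc
    have h2 : HasDerivAt (fun s => fderiv ℝ F (s, q) (0, u))
        (fderiv ℝ (fderiv ℝ F) (t, q) (1, 0) (0, u)) t := by
      have := h1.clm_apply (hasDerivAt_const t ((0, u) : ℝ × E))
      simpa using this
    have hsym : fderiv ℝ (fderiv ℝ F) (t, q) (1, 0) (0, u)
        = fderiv ℝ (fderiv ℝ F) (t, q) (0, u) (1, 0) :=
      second_derivative_symmetric hA (hAd (t, q)) _ _
    -- identify the mixed partial with the derivative of R along the flow
    have hfun : (fun z : ℝ × E => fderiv ℝ F z (1, 0)) = fun z => R (F z) := by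
      funext z
      exact hBt z.1 z.2
    have hL : HasFDerivAt (fun z : ℝ × E => fderiv ℝ F z (1, 0))
        ((fderiv ℝ (fderiv ℝ F) (t, q)).flip (1, 0)) (t, q) := by
      have := (hAd (t, q)).clm_apply (hasFDerivAt_const ((1, 0) : ℝ × E) ((t, q) : ℝ × E))
      simpa using this
    have hRf : HasFDerivAt (fun z : ℝ × E => R (F z))
        ((fderiv ℝ R (Φ t q)).comp (fderiv ℝ F (t, q))) (t, q) :=
      ((hR.differentiable (by simp) _).hasFDerivAt).comp _ (hA (t, q))
    rw [hfun] at hL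
    have heq := hL.unique hRf
    have heq2 := congrArg (fun L : (ℝ × E) →L[ℝ] E => L ((0, u) : ℝ × E)) heq
    simp only [ContinuousLinearMap.flip_apply, ContinuousLinearMap.comp_apply] at heq2
    rw [hsym, heq2] at h2
    exact h2
  -- the key pointwise identity d(α(R)) = 0
  have hkey : ∀ (q w : E), fderiv ℝ α q w (R q) + α q (fderiv ℝ R q w) = 0 := by
    intro q w
    have h1 : HasFDerivAt (fun q' => α q' (R q'))
        ((α q).comp (fderiv ℝ R q) + (fderiv ℝ α q).flip (R q)) q :=
      ((hα.differentiable (by simp) q).hasFDerivAt).clm_apply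
        ((hR.differentiable (by simp) q).hasFDerivAt)
    have hfun : (fun q' => α q' (R q')) = fun _ : E => (1 : ℝ) := funext hReeb₁
    rw [hfun] at h1
    have heq := h1.unique (hasFDerivAt_const (1 : ℝ) q)
    have := congrArg (fun L : E →L[ℝ] ℝ => L w) heq
    simp only [ContinuousLinearMap.add_apply, ContinuousLinearMap.comp_apply,
      ContinuousLinearMap.flip_apply, ContinuousLinearMap.zero_apply] at this
    linarith
  -- flow invariance of α
  have hinv : ∀ (t : ℝ) (q : E) (u : E),
      α (Φ t q) (fderiv ℝ F (t, q) (0, u)) = α q u := by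
    intro t q u
    have hg : ∀ s : ℝ, HasDerivAt (fun s' => α (Φ s' q) (fderiv ℝ F (s', q) (0, u))) 0 s := by
      intro s
      have hαc : HasDerivAt (fun s' => α (Φ s' q)) (fderiv ℝ α (Φ s q) (R (Φ s q))) s :=
        ((hα.differentiable (by simp) _).hasFDerivAt).comp_hasDerivAt s (hΦflow s q)
      have h2 := hαc.clm_apply (hw s q u)
      have hz : fderiv ℝ α (Φ s q) (R (Φ s q)) (fderiv ℝ F (s, q) (0, u))
          + α (Φ s q) (fderiv ℝ R (Φ s q) (fderiv ℝ F (s, q) (0, u))) = 0 := by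
        have ha := hkey (Φ s q) (fderiv ℝ F (s, q) (0, u))
        have hb := hReeb₂ (Φ s q) (fderiv ℝ F (s, q) (0, u))
        linarith
      rwa [hz] at h2
    have hconst := is_const_of_deriv_eq_zero
      (fun s => (hg s).differentiableAt) (fun s => (hg s).deriv) t 0
    have hw0 : fderiv ℝ F (0, q) (0, u) = u := by
      have hc : HasFDerivAt (fun q' : E => (((0 : ℝ), q') : ℝ × E))
          ((0 : E →L[ℝ] ℝ).prod (ContinuousLinearMap.id ℝ E)) q :=
        (hasFDerivAt_const (0 : ℝ) q).prodMk (hasFDerivAt_id q)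
      have h1 : HasFDerivAt (fun q' : E => F (0, q'))
          ((fderiv ℝ F (0, q)).comp ((0 : E →L[ℝ] ℝ).prod (ContinuousLinearMap.id ℝ E))) q :=
        (hA (0, q)).comp q hc
      have hfun : (fun q' : E => F ((0 : ℝ), q')) = id := funext fun q' => hΦ0 q'
      rw [hfun] at h1
      have heq := h1.unique (hasFDerivAt_id q)
      have := congrArg (fun L : E →L[ℝ] E => L u) heq
      simpa using this
    calc α (Φ t q) (fderiv ℝ F (t, q) (0, u))
        = α (Φ 0 q) (fderiv ℝ F (0, q) (0, u)) := hconst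
      _ = α q u := by rw [hΦ0, hw0]
  -- now the main computation
  intro p x v
  set t₀ : ℝ := -(H x) with ht₀
  have hHd : HasFDerivAt H (fderiv ℝ H x) x := (hH.differentiable (by simp) x).hasFDerivAt
  have hG : HasFDerivAt (fun q : E × F₁ => ((-(H q.2) : ℝ), q.1))
      ((-( (fderiv ℝ H x).comp (ContinuousLinearMap.snd ℝ E F₁))).prod
        (ContinuousLinearMap.fst ℝ E F₁)) (p, x) :=
    HasFDerivAt.prodMk (((hHd.comp (p, x) (hasFDerivAt_snd))).neg) (hasFDerivAt_fst)
  have hφ : HasFDerivAt (fun q : E × F₁ => Φ (-(H q.2)) q.1)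
      ((fderiv ℝ F (t₀, p)).comp
        ((-( (fderiv ℝ H x).comp (ContinuousLinearMap.snd ℝ E F₁))).prod
          (ContinuousLinearMap.fst ℝ E F₁))) (p, x) :=
    by have := (hA (t₀, p)).comp (p, x) hG; exact this
  have hfval : fderiv ℝ (fun q : E × F₁ => Φ (-(H q.2)) q.1) (p, x) v
      = fderiv ℝ F (t₀, p) ((-(fderiv ℝ H x v.2) : ℝ), v.1) := by
    rw [hφ.fderiv]
    simp
  have hsplit : ((-(fderiv ℝ H x v.2) : ℝ), v.1)
      = (-(fderiv ℝ H x v.2)) • (((1 : ℝ), (0 : E)) : ℝ × E) + (((0 : ℝ), v.1) : ℝ × E) := by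
    simp [Prod.ext_iff]
  have hαval : α (Φ t₀ p) (fderiv ℝ (fun q : E × F₁ => Φ (-(H q.2)) q.1) (p, x) v)
      = -(fderiv ℝ H x v.2) + α p v.1 := by
    rw [hfval, hsplit, map_add, map_smul, map_add, map_smul, hBt t₀ p, hReeb₁,
      hinv t₀ p v.1]
    simp
  have hHv : fderiv ℝ H x v.2 = lam₂ (Ψ x) (fderiv ℝ Ψ x v.2) - lam₁ x v.2 := by
    have := congrArg (fun L : F₁ →L[ℝ] ℝ => L v.2) (hexact x)
    simpa using this
  rw [hαval, hHv]
  ring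
end

section
/- Let g₁ : W₁ → ℝ and g₂ : W₂ → ℝ be strictly positive Morse functions on smooth manifolds, and for q > 1 define f_q : W₁ × W₂ → ℝ by f_q(x, y) = (g₁(x)^q + g₂(y)^q)^{1/q}. Then the critical points of f_q are exactly the pairs (x, y) with x a critical point of g₁ and y a critical point of g₂, i.e. Crit(f_q) = Crit(g₁) × Crit(g₂). -/
open scoped Manifold

/-! By the chain rule the differential of `f_q` at `(x, y)` is
`c • (c₁ • dg₁ₓ).coprod (c₂ • dg₂ᵧ)` with `c = (1/q) u^(1/q - 1)`, `cᵢ = q gᵢ^(q-1)` and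
`u = g₁(x)^q + g₂(y)^q`; positivity of the `gᵢ` makes all three scalars nonzero, and a covector
on a product vanishes iff both of its components do. -/

namespace ContinuousLinearMap

variable {R M M₁ M₂ : Type*} [Semiring R] [TopologicalSpace M] [TopologicalSpace M₁]
  [TopologicalSpace M₂] [AddCommMonoid M] [Module R M] [ContinuousAdd M]
  [AddCommMonoid M₁] [Module R M₁] [AddCommMonoid M₂] [Module R M₂]

theorem coprod_eq_zero_iff {f₁ : M₁ →L[R] M} {f₂ : M₂ →L[R] M} :
    f₁.coprod f₂ = 0 ↔ f₁ = 0 ∧ f₂ = 0 := by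
  constructor
  · intro h
    exact ⟨by simpa using congr_arg (·.comp (inl R M₁ M₂)) h,
      by simpa using congr_arg (·.comp (inr R M₁ M₂)) h⟩
  · rintro ⟨rfl, rfl⟩
    ext <;> simp

end ContinuousLinearMap

section Manifold

variable {E H M : Type*} [NormedAddCommGroup E] [NormedSpace ℝ E] [TopologicalSpace H]
  {I : ModelWithCorners ℝ E H} [TopologicalSpace M] [ChartedSpace H M]

theorem HasMFDerivAt.rpow_const {f : M → ℝ} {x : M} {f' : TangentSpace I x →L[ℝ] ℝ} {p : ℝ}
    (hf : HasMFDerivAt I 𝓘(ℝ, ℝ) f x f') (h : f x ≠ 0 ∨ 1 ≤ p) :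
    HasMFDerivAt I 𝓘(ℝ, ℝ) (fun y => f y ^ p) x ((p * f x ^ (p - 1)) • f') := by
  refine ((Real.hasDerivAt_rpow_const h).hasFDerivAt.hasMFDerivAt.comp x hf).congr_mfderiv ?_
  ext v
  exact mul_comm (f' v) _

end Manifold

theorem stmt_1_general
    {E₁ : Type*} [NormedAddCommGroup E₁] [NormedSpace ℝ E₁]
    {E₂ : Type*} [NormedAddCommGroup E₂] [NormedSpace ℝ E₂]
    {W₁ : Type*} [TopologicalSpace W₁] [ChartedSpace E₁ W₁]
    {W₂ : Type*} [TopologicalSpace W₂] [ChartedSpace E₂ W₂]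
    (g₁ : W₁ → ℝ) (g₂ : W₂ → ℝ)
    (hg₁ : ContMDiff (𝓘(ℝ, E₁)) (𝓘(ℝ, ℝ)) (⊤ : ℕ∞) g₁)
    (hg₂ : ContMDiff (𝓘(ℝ, E₂)) (𝓘(ℝ, ℝ)) (⊤ : ℕ∞) g₂)
    (hg₁pos : ∀ x, 0 < g₁ x) (hg₂pos : ∀ y, 0 < g₂ y)
    (q : ℝ) (hq : 1 < q) :
    {p : W₁ × W₂ |
        mfderiv ((𝓘(ℝ, E₁)).prod (𝓘(ℝ, E₂))) (𝓘(ℝ, ℝ))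
          (fun p : W₁ × W₂ => ((g₁ p.1) ^ q + (g₂ p.2) ^ q) ^ (1/q)) p = 0}
      = {p : W₁ × W₂ |
          mfderiv (𝓘(ℝ, E₁)) (𝓘(ℝ, ℝ)) g₁ p.1 = 0 ∧
          mfderiv (𝓘(ℝ, E₂)) (𝓘(ℝ, ℝ)) g₂ p.2 = 0} := by
  ext ⟨x, y⟩
  have hq₀ : 0 < q := by linarith
  have hx := hg₁pos x
  have hy := hg₂pos y
  have hsum : 0 < g₁ x ^ q + g₂ y ^ q := by positivity
  have h₁ := ((hg₁.mdifferentiableAt (by simp)).hasMFDerivAt.rpow_const (p := q)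
    (.inl hx.ne')).comp (x, y) (hasMFDerivAt_fst (I' := 𝓘(ℝ, E₂)) (x, y))
  have h₂ := ((hg₂.mdifferentiableAt (by simp)).hasMFDerivAt.rpow_const (p := q)
    (.inl hy.ne')).comp (x, y) (hasMFDerivAt_snd (I := 𝓘(ℝ, E₁)) (x, y))
  have hf : HasMFDerivAt ((𝓘(ℝ, E₁)).prod (𝓘(ℝ, E₂))) (𝓘(ℝ, ℝ))
      (fun p : W₁ × W₂ => ((g₁ p.1) ^ q + (g₂ p.2) ^ q) ^ (1/q)) (x, y)
      ((1 / q * (g₁ x ^ q + g₂ y ^ q) ^ (1 / q - 1)) •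
        ((q * g₁ x ^ (q - 1)) • mfderiv 𝓘(ℝ, E₁) 𝓘(ℝ, ℝ) g₁ x).coprod
          ((q * g₂ y ^ (q - 1)) • mfderiv 𝓘(ℝ, E₂) 𝓘(ℝ, ℝ) g₂ y)) :=
    (h₁.add h₂).rpow_const (.inl hsum.ne')
  rw [Set.mem_ofPred, Set.mem_ofPred, hf.mfderiv]
  exact ((IsUnit.mk0 _ (by positivity)).smul_eq_zero.trans
    ContinuousLinearMap.coprod_eq_zero_iff).trans
      (and_congr (IsUnit.mk0 _ (by positivity)).smul_eq_zero
        (IsUnit.mk0 _ (by positivity)).smul_eq_zero)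

/-- for strictly positive smooth functions `g₁ : W₁ → ℝ`, `g₂ : W₂ → ℝ` on
smooth manifolds and `q > 1`, the critical points of
`f_q(x,y) = (g₁(x)^q + g₂(y)^q)^{1/q}` on `W₁ × W₂` are exactly the pairs of critical
points: `Crit(f_q) = Crit(g₁) × Crit(g₂)`.  (The hypothesis that the `gᵢ` are Morse is
not needed for this equality.) -/
theorem stmt_1
    {E₁ : Type*} [NormedAddCommGroup E₁] [NormedSpace ℝ E₁]
    {E₂ : Type*} [NormedAddCommGroup E₂] [NormedSpace ℝ E₂]
    {W₁ : Type*} [TopologicalSpace W₁] [ChartedSpace E₁ W₁]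
    [IsManifold (𝓘(ℝ, E₁)) ((⊤ : ℕ∞) : WithTop ℕ∞) W₁]
    {W₂ : Type*} [TopologicalSpace W₂] [ChartedSpace E₂ W₂]
    [IsManifold (𝓘(ℝ, E₂)) ((⊤ : ℕ∞) : WithTop ℕ∞) W₂]
    (g₁ : W₁ → ℝ) (g₂ : W₂ → ℝ)
    (hg₁ : ContMDiff (𝓘(ℝ, E₁)) (𝓘(ℝ, ℝ)) (⊤ : ℕ∞) g₁)
    (hg₂ : ContMDiff (𝓘(ℝ, E₂)) (𝓘(ℝ, ℝ)) (⊤ : ℕ∞) g₂)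
    (hg₁pos : ∀ x, 0 < g₁ x) (hg₂pos : ∀ y, 0 < g₂ y)
    (q : ℝ) (hq : 1 < q) :
    {p : W₁ × W₂ |
        mfderiv ((𝓘(ℝ, E₁)).prod (𝓘(ℝ, E₂))) (𝓘(ℝ, ℝ))
          (fun p : W₁ × W₂ => ((g₁ p.1) ^ q + (g₂ p.2) ^ q) ^ (1/q)) p = 0}
      = {p : W₁ × W₂ |
          mfderiv (𝓘(ℝ, E₁)) (𝓘(ℝ, ℝ)) g₁ p.1 = 0 ∧
          mfderiv (𝓘(ℝ, E₂)) (𝓘(ℝ, ℝ)) g₂ p.2 = 0} :=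
  stmt_1_general g₁ g₂ hg₁ hg₂ hg₁pos hg₂pos q hq
end

section
/- Let E → M be a complex vector bundle over a compact Hausdorff space M. Then there exists a complex vector bundle τ → M and a positive integer k such that E ⊕ τ is isomorphic to the trivial complex bundle M × ℂ^k. -/
/-!
Cover the base by finitely many trivializations `eᵢ` and choose a partition of unity `ρᵢ`
subordinate to their base sets. With `cᵢ = √ρᵢ`, the fiberwise maps `φ = (cᵢ • eᵢ)ᵢ` into the
trivial bundle with fiber `Fⁿ` and `ψ = ∑ᵢ cᵢ • eᵢ⁻¹` back are continuous, because each term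
vanishes near every point outside `tsupport ρᵢ ⊆ baseSet eᵢ`, and `ψ ∘ φ = ∑ᵢ ρᵢ = id`.
So `E` is a direct summand of a trivial bundle, with complement `τ = ker ψ`.
-/

open Bundle Topology Set

section Fiber

variable {𝕜 B F : Type*} [NontriviallyNormedField 𝕜] [TopologicalSpace B]
  [NormedAddCommGroup F] [NormedSpace 𝕜 F] {E : B → Type*} [TopologicalSpace (TotalSpace F E)]
  [∀ x, AddCommGroup (E x)] [∀ x, Module 𝕜 (E x)] [∀ x, TopologicalSpace (E x)]
  [FiberBundle F E]

variable (𝕜 F) in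
theorem VectorBundle.isTopologicalAddGroup_fiber [VectorBundle 𝕜 F E] (x : B) :
    IsTopologicalAddGroup (E x) :=
  let e := (trivializationAt F E x).continuousLinearEquivAt 𝕜 x
    (FiberBundle.mem_baseSet_trivializationAt F E x)
  e.toHomeomorph.isInducing.topologicalAddGroup e

variable (F) in
theorem VectorBundle.continuousSMul_fiber [VectorBundle 𝕜 F E] (x : B) :
    ContinuousSMul 𝕜 (E x) :=
  let e := (trivializationAt F E x).continuousLinearEquivAt 𝕜 x
    (FiberBundle.mem_baseSet_trivializationAt F E x)
  e.toHomeomorph.isInducing.continuousSMul continuous_id (map_smul e _ _)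

theorem Bundle.Trivialization.continuous_smul_continuousLinearMapAt
    (e : Trivialization F (π F E)) [e.IsLinear 𝕜] {c : B → 𝕜} (hc : Continuous c)
    (hce : tsupport c ⊆ e.baseSet) :
    Continuous fun p : TotalSpace F E => c p.proj • e.continuousLinearMapAt 𝕜 p.proj p.2 := by
  refine ContinuousOn.continuous_of_tsupport_subset ?_ e.open_source ?_
  · refine ((hc.comp (FiberBundle.continuous_proj F E)).continuousOn.smul
      (continuous_snd.comp_continuousOn e.continuousOn)).congr fun p hp => ?_
    rw [Trivialization.continuousLinearMapAt_apply_of_mem 𝕜 e (e.mem_source.1 hp)]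
    rfl
  · calc tsupport _ ⊆ tsupport (c ∘ π F E) := tsupport_smul_subset_left _ _
      _ ⊆ π F E ⁻¹' tsupport c :=
        tsupport_comp_subset_preimage _ (FiberBundle.continuous_proj F E)
      _ ⊆ e.source := by rw [e.source_eq]; exact preimage_mono hce

theorem Bundle.Trivialization.continuous_totalSpaceMk_smul_symmL [VectorBundle 𝕜 F E]
    (e : Trivialization F (π F E)) [e.IsLinear 𝕜] {c : B → 𝕜} (hc : Continuous c)
    (hce : tsupport c ⊆ e.baseSet) :
    Continuous fun q : B × F => TotalSpace.mk' F q.1 (c q.1 • e.symmL 𝕜 q.1 q.2) := by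
  refine continuous_iff_continuousAt.2 fun q => ?_
  by_cases hq : q.1 ∈ tsupport c
  · have hbase : Prod.fst ⁻¹' e.baseSet ∈ 𝓝 q :=
      (e.open_baseSet.preimage continuous_fst).mem_nhds (hce hq)
    have hsymm : ContinuousAt
        (fun q : B × F => TotalSpace.mk' F q.1 (e.symm q.1 (c q.1 • q.2))) q :=
      (e.continuousOn_symm.continuousAt (prod_mem_nhds (e.open_baseSet.mem_nhds (hce hq))
        Filter.univ_mem)).comp (f := fun q : B × F => (q.1, c q.1 • q.2))
        (continuous_fst.prodMk ((hc.comp continuous_fst).smul continuous_snd)).continuousAt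
    refine hsymm.congr_of_eventuallyEq ?_
    filter_upwards [hbase] with q' hq'
    rw [← map_smul, e.symmL_apply hq']
  · refine ((continuous_zeroSection 𝕜).comp continuous_fst).continuousAt.congr_of_eventuallyEq ?_
    filter_upwards [((isClosed_tsupport c).isOpen_compl.preimage continuous_fst).mem_nhds hq]
      with q' hq'
    rw [image_eq_zero_of_notMem_tsupport hq', zero_smul]
    rfl

variable (𝕜) in
theorem FiberBundle.continuous_totalSpaceMk_sum [VectorBundle 𝕜 F E] {X ι : Type*}
    [TopologicalSpace X] (s : Finset ι) {b : X → B} (hb : Continuous b) {f : ι → ∀ x, E (b x)}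
    (hf : ∀ i ∈ s, Continuous fun x => TotalSpace.mk' F (b x) (f i x)) :
    Continuous fun x => TotalSpace.mk' F (b x) (∑ i ∈ s, f i x) := by
  refine continuous_iff_continuousAt.2 fun x₀ => ?_
  rw [FiberBundle.continuousAt_totalSpace]
  refine ⟨hb.continuousAt, ?_⟩
  set e := trivializationAt F E (b x₀)
  have hcoord : ∀ i ∈ s, ContinuousAt (fun x => (e ⟨b x, f i x⟩).2) x₀ := fun i hi =>
    ((FiberBundle.continuousAt_totalSpace F _).1 (hf i hi).continuousAt).2
  have hbase : ∀ᶠ x in 𝓝 x₀, b x ∈ e.baseSet := hb.continuousAt.preimage_mem_nhds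
    (e.open_baseSet.mem_nhds (FiberBundle.mem_baseSet_trivializationAt F E (b x₀)))
  refine ContinuousAt.congr_of_eventuallyEq (tendsto_finsetSum s hcoord) ?_
  filter_upwards [hbase] with x hx
  have hlin := map_sum (e.linearMapAt 𝕜 (b x)) (fun i => f i x) s
  rwa [e.coe_linearMapAt_of_mem hx] at hlin

end Fiber

theorem exists_finset_continuous_sum_sq_eq_one {𝕜 X ι : Type*} [RCLike 𝕜] [TopologicalSpace X]
    [CompactSpace X] [T2Space X] {U : ι → Set X} (hU : ∀ i, IsOpen (U i))
    (hcov : ∀ x, ∃ i, x ∈ U i) :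
    ∃ (t : Finset ι) (c : t → X → 𝕜), (∀ i, Continuous (c i)) ∧
      (∀ i, tsupport (c i) ⊆ U i) ∧ ∀ x, ∑ i, c i x ^ 2 = 1 := by
  obtain ⟨t, ht⟩ := isCompact_univ.elim_finite_subcover U hU fun x _ => mem_iUnion.2 (hcov x)
  obtain ⟨ρ, hρ⟩ := PartitionOfUnity.exists_isSubordinate isClosed_univ (fun i : t => U i)
    (fun i => hU i) (by simpa [iUnion_subtype] using ht)
  refine ⟨t, fun i x => (√(ρ i x) : 𝕜), fun i => ?_, fun i => ?_, fun x => ?_⟩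
  · exact RCLike.continuous_ofReal.comp (ρ i).continuous.sqrt
  · exact (tsupport_comp_subset (g := fun r : ℝ => (√r : 𝕜)) (by simp) (ρ i)).trans (hρ i)
  · have hρx := ρ.sum_eq_one (mem_univ x)
    rw [finsum_eq_sum_of_fintype] at hρx
    simp only [← RCLike.ofReal_pow, Real.sq_sqrt (ρ.nonneg _ x), ← RCLike.ofReal_sum, hρx,
      RCLike.ofReal_one]

namespace VectorBundle

section Retraction

variable {𝕜 B F ι : Type*} [NontriviallyNormedField 𝕜] [TopologicalSpace B]
  [NormedAddCommGroup F] [NormedSpace 𝕜 F] {E : B → Type*} [TopologicalSpace (TotalSpace F E)]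
  [∀ x, AddCommGroup (E x)] [∀ x, Module 𝕜 (E x)] [∀ x, TopologicalSpace (E x)]
  [FiberBundle F E] (e : ι → Trivialization F (π F E)) [∀ i, (e i).IsLinear 𝕜] (c : ι → B → 𝕜)

noncomputable def trivialEmbedding (x : B) : E x →L[𝕜] (ι → F) :=
  ContinuousLinearMap.pi fun i => c i x • (e i).continuousLinearMapAt 𝕜 x

theorem continuous_trivialEmbedding (hc : ∀ i, Continuous (c i))
    (he : ∀ i, tsupport (c i) ⊆ (e i).baseSet) :
    Continuous fun p : TotalSpace F E => trivialEmbedding e c p.proj p.2 :=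
  continuous_pi fun i => (e i).continuous_smul_continuousLinearMapAt (hc i) (he i)

variable [Fintype ι] [∀ x, IsTopologicalAddGroup (E x)] [∀ x, ContinuousSMul 𝕜 (E x)]

noncomputable def trivialRetraction (x : B) : (ι → F) →L[𝕜] E x :=
  ∑ i, c i x • ((e i).symmL 𝕜 x).comp (ContinuousLinearMap.proj i)

theorem trivialRetraction_trivialEmbedding (he : ∀ i, Function.support (c i) ⊆ (e i).baseSet)
    (hc : ∀ x, ∑ i, c i x ^ 2 = 1) (x : B) (v : E x) :
    trivialRetraction e c x (trivialEmbedding e c x v) = v := by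
  have hterm : ∀ i, c i x • (e i).symmL 𝕜 x (c i x • (e i).continuousLinearMapAt 𝕜 x v) =
      c i x ^ 2 • v := by
    intro i
    by_cases hx : c i x = 0
    · simp [hx]
    · rw [map_smul, (e i).symmL_continuousLinearMapAt (he i hx), smul_smul, sq]
  simp only [trivialRetraction, trivialEmbedding, sum_apply, smul_apply,
    ContinuousLinearMap.comp_apply, ContinuousLinearMap.proj_apply, ContinuousLinearMap.pi_apply,
    hterm, ← Finset.sum_smul, hc, one_smul]

theorem continuous_trivialRetraction [VectorBundle 𝕜 F E] (hc : ∀ i, Continuous (c i))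
    (he : ∀ i, tsupport (c i) ⊆ (e i).baseSet) :
    Continuous fun q : B × (ι → F) => TotalSpace.mk' F q.1 (trivialRetraction e c q.1 q.2) := by
  simp only [trivialRetraction, sum_apply, smul_apply, ContinuousLinearMap.comp_apply,
    ContinuousLinearMap.proj_apply]
  refine FiberBundle.continuous_totalSpaceMk_sum 𝕜 _ continuous_fst fun i _ => ?_
  exact ((e i).continuous_totalSpaceMk_smul_symmL (hc i) (he i)).comp
    (continuous_fst.prodMk ((continuous_apply i).comp continuous_snd :
      Continuous fun q : B × (ι → F) => q.2 i))

end Retraction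

theorem exists_continuous_retraction_trivial {𝕜 B : Type*} [RCLike 𝕜]
    [TopologicalSpace B] [CompactSpace B] [T2Space B] (F : Type*) [NormedAddCommGroup F]
    [NormedSpace 𝕜 F] (E : B → Type*) [TopologicalSpace (TotalSpace F E)]
    [∀ x, AddCommGroup (E x)] [∀ x, Module 𝕜 (E x)] [∀ x, TopologicalSpace (E x)]
    [FiberBundle F E] [VectorBundle 𝕜 F E] :
    ∃ (t : Finset B) (φ : ∀ x, E x →L[𝕜] (t → F)) (ψ : ∀ x, (t → F) →L[𝕜] E x),
      Continuous (fun p : TotalSpace F E => φ p.proj p.2) ∧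
      Continuous (fun q : B × (t → F) => TotalSpace.mk' F q.1 (ψ q.1 q.2)) ∧
      ∀ x v, ψ x (φ x v) = v := by
  obtain ⟨t, c, hc, hce, hsq⟩ := exists_finset_continuous_sum_sq_eq_one (𝕜 := 𝕜)
    (fun x => (trivializationAt F E x).open_baseSet)
    fun x => ⟨x, FiberBundle.mem_baseSet_trivializationAt F E x⟩
  have := isTopologicalAddGroup_fiber 𝕜 F (E := E)
  have := continuousSMul_fiber (𝕜 := 𝕜) F (E := E)
  let e : t → Trivialization F (π F E) := fun i => trivializationAt F E i
  exact ⟨t, trivialEmbedding e c, trivialRetraction e c, continuous_trivialEmbedding e c hc hce,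
    continuous_trivialRetraction e c hc hce,
    trivialRetraction_trivialEmbedding e c (fun i => (subset_tsupport _).trans (hce i)) hsq⟩

end VectorBundle

/-- any complex vector bundle `E` over a compact Hausdorff base admits a
complement `τ` with `E ⊕ τ` trivial.  Equivalently (as formalized here): there are `k ∈ ℕ`
and continuous fiberwise-linear bundle maps `φ : E → M × ℂ^k` and `ψ : M × ℂ^k → E` with
`ψ ∘ φ = id`, exhibiting `E` as a direct summand of the trivial bundle `M × ℂ^k`; the
complement `τ = ker(φ ∘ ψ... )`, i.e. the image of `id − φ ∘ ψ`, then satisfies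
`E ⊕ τ ≅ M × ℂ^k`. -/
theorem stmt_5
    {B : Type*} [TopologicalSpace B] [CompactSpace B] [T2Space B]
    (F : Type*) [NormedAddCommGroup F] [NormedSpace ℂ F] [FiniteDimensional ℂ F]
    (E : B → Type*) [TopologicalSpace (TotalSpace F E)]
    [∀ x, AddCommGroup (E x)] [∀ x, Module ℂ (E x)] [∀ x, TopologicalSpace (E x)]
    [FiberBundle F E] [VectorBundle ℂ F E] :
    ∃ (k : ℕ) (φ : ∀ x, E x →L[ℂ] (Fin k → ℂ)) (ψ : ∀ x, (Fin k → ℂ) →L[ℂ] E x),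
      Continuous (fun p : TotalSpace F E => (p.1, φ p.1 p.2)) ∧
      Continuous (fun q : B × (Fin k → ℂ) =>
        (TotalSpace.mk q.1 (ψ q.1 q.2) : TotalSpace F E)) ∧
      ∀ (x : B) (v : E x), ψ x (φ x v) = v := by
  obtain ⟨t, φ, ψ, hφ, hψ, hψφ⟩ := VectorBundle.exists_continuous_retraction_trivial (𝕜 := ℂ) F E
  let A := (Module.finBasis ℂ (t → F)).equivFun.toContinuousLinearEquiv
  refine ⟨_, fun x => A.toContinuousLinearMap.comp (φ x),
    fun x => (ψ x).comp A.symm.toContinuousLinearMap, ?_, ?_, fun x v => ?_⟩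
  · exact (FiberBundle.continuous_proj F E).prodMk (A.continuous.comp hφ)
  · exact hψ.comp (continuous_fst.prodMk (A.symm.continuous.comp continuous_snd))
  · simp [hψφ]
end

section
/- Let (M, α) be a contact manifold of dimension 2n+1 and m ≥ 1. On M × ℝ^{2m} with polar coordinates (r_i, θ_i) on each ℝ² factor, the 1-form α_m = α + Σ_{i=1}^m r_i² dθ_i is a contact form on the (2n+2m+1)-dimensional manifold M × ℝ^{2m}. -/
/-- Exterior derivative of a 1-form in a flat chart. -/
noncomputable def extDeriv1 {E : Type*} [NormedAddCommGroup E] [NormedSpace ℝ E]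
    (α : E → E →L[ℝ] ℝ) (p v w : E) : ℝ :=
  fderiv ℝ α p v w - fderiv ℝ α p w v

/-- Pointwise contact condition for a 1-form on an odd-dimensional space: `α_p ≠ 0` and
`dα_p` nondegenerate on `ker α_p`; equivalent to `α ∧ (dα)^n ≠ 0` in dimension `2n+1`. -/
def IsContactForm1 {E : Type*} [NormedAddCommGroup E] [NormedSpace ℝ E]
    (α : E → E →L[ℝ] ℝ) : Prop :=
  ∀ p, α p ≠ 0 ∧
    ∀ v, α p v = 0 → v ≠ 0 → ∃ w, α p w = 0 ∧ extDeriv1 α p v w ≠ 0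


noncomputable section Aux15

open ContinuousLinearMap

variable {E : Type*} [NormedAddCommGroup E] [NormedSpace ℝ E]

/-- The standard symplectic-type pairing on `(ℝ²)^m`. -/
def omega15 {m : ℕ} (ζ η : Fin m → ℝ × ℝ) : ℝ :=
  ∑ i, ((ζ i).1 * (η i).2 - (ζ i).2 * (η i).1)

lemma omega15_skew {m : ℕ} (ζ η : Fin m → ℝ × ℝ) : omega15 η ζ = - omega15 ζ η := by
  simp only [omega15, ← Finset.sum_neg_distrib]
  exact Finset.sum_congr rfl fun i _ => by ring

lemma omega15_self {m : ℕ} (ζ : Fin m → ℝ × ℝ) : omega15 ζ ζ = 0 := by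
  have h := omega15_skew ζ ζ
  linarith

lemma omega15_smul {m : ℕ} (ζ : Fin m → ℝ × ℝ) (t : ℝ) (η : Fin m → ℝ × ℝ) :
    omega15 ζ (t • η) = t * omega15 ζ η := by
  simp only [omega15, Finset.mul_sum, Pi.smul_apply, Prod.smul_fst, Prod.smul_snd, smul_eq_mul]
  exact Finset.sum_congr rfl fun i _ => by ring

lemma omega15_zero_right {m : ℕ} (ζ : Fin m → ℝ × ℝ) : omega15 ζ 0 = 0 := by
  simp [omega15]

lemma omega15_nondeg {m : ℕ} {ζ : Fin m → ℝ × ℝ} (h : ζ ≠ 0) :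
    ∃ η, omega15 ζ η ≠ 0 := by
  refine ⟨fun i => (-(ζ i).2, (ζ i).1), ?_⟩
  have h1 : omega15 ζ (fun i => (-(ζ i).2, (ζ i).1))
      = ∑ i, ((ζ i).1 ^ 2 + (ζ i).2 ^ 2) :=
    Finset.sum_congr rfl fun i _ => by ring
  rw [h1]
  have hex : ∃ i, ζ i ≠ 0 := by
    by_contra hc
    push_neg at hc
    exact h (funext hc)
  obtain ⟨i, hi⟩ := hex
  have hpos : 0 < (ζ i).1 ^ 2 + (ζ i).2 ^ 2 := by
    by_cases h1 : (ζ i).1 = 0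
    · have h2 : (ζ i).2 ≠ 0 := fun h2 => hi (Prod.ext h1 h2)
      positivity
    · positivity
  exact ne_of_gt <| Finset.sum_pos' (f := fun j => (ζ j).1 ^ 2 + (ζ j).2 ^ 2)
    (fun j _ => add_nonneg (sq_nonneg _) (sq_nonneg _)) ⟨i, Finset.mem_univ i, hpos⟩

/-- The sum `Σᵢ (xᵢ dyᵢ − yᵢ dxᵢ)` as a continuous linear map in `z`. -/
def Phi15 (E : Type*) [NormedAddCommGroup E] [NormedSpace ℝ E] (m : ℕ) :
    (Fin m → ℝ × ℝ) →L[ℝ] (E × (Fin m → ℝ × ℝ) →L[ℝ] ℝ) :=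
  ∑ i : Fin m,
    (((ContinuousLinearMap.fst ℝ ℝ ℝ).comp (ContinuousLinearMap.proj i)).smulRight
        ((ContinuousLinearMap.snd ℝ ℝ ℝ).comp
          ((ContinuousLinearMap.proj i).comp (ContinuousLinearMap.snd ℝ E (Fin m → ℝ × ℝ))))
      - ((ContinuousLinearMap.snd ℝ ℝ ℝ).comp (ContinuousLinearMap.proj i)).smulRight
        ((ContinuousLinearMap.fst ℝ ℝ ℝ).comp
          ((ContinuousLinearMap.proj i).comp (ContinuousLinearMap.snd ℝ E (Fin m → ℝ × ℝ)))))

lemma Phi15_apply (m : ℕ) (z : Fin m → ℝ × ℝ) :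
    Phi15 E m z = ∑ i : Fin m,
      ((z i).1 • ((ContinuousLinearMap.snd ℝ ℝ ℝ).comp
          ((ContinuousLinearMap.proj i).comp (ContinuousLinearMap.snd ℝ E (Fin m → ℝ × ℝ))))
      - (z i).2 • ((ContinuousLinearMap.fst ℝ ℝ ℝ).comp
          ((ContinuousLinearMap.proj i).comp (ContinuousLinearMap.snd ℝ E (Fin m → ℝ × ℝ))))) := by
  simp [Phi15]

lemma Phi15_apply_apply (m : ℕ) (z : Fin m → ℝ × ℝ) (w : E × (Fin m → ℝ × ℝ)) :
    Phi15 E m z w = omega15 z w.2 := by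
  simp [Phi15, omega15, mul_comm]

/-- The contact form `α + Σᵢ rᵢ² dθᵢ` on `E × (ℝ²)^m`. -/
def beta15 (m : ℕ) (α : E → E →L[ℝ] ℝ) (pz : E × (Fin m → ℝ × ℝ)) :
    E × (Fin m → ℝ × ℝ) →L[ℝ] ℝ :=
  (α pz.1).comp (ContinuousLinearMap.fst ℝ E (Fin m → ℝ × ℝ)) + Phi15 E m pz.2

lemma beta15_apply (m : ℕ) (α : E → E →L[ℝ] ℝ) (pz w : E × (Fin m → ℝ × ℝ)) :
    beta15 m α pz w = α pz.1 w.1 + omega15 pz.2 w.2 := by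
  simp [beta15, Phi15_apply_apply]

lemma beta15_hasFDerivAt (m : ℕ) (α : E → E →L[ℝ] ℝ) (hα : Differentiable ℝ α)
    (pz : E × (Fin m → ℝ × ℝ)) :
    HasFDerivAt (beta15 m α)
      ((((compL ℝ (E × (Fin m → ℝ × ℝ)) E ℝ).flip
            (ContinuousLinearMap.fst ℝ E (Fin m → ℝ × ℝ))).comp
          ((fderiv ℝ α pz.1).comp (ContinuousLinearMap.fst ℝ E (Fin m → ℝ × ℝ))))
        + (Phi15 E m).comp (ContinuousLinearMap.snd ℝ E (Fin m → ℝ × ℝ))) pz := by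
  have h1 : HasFDerivAt (fun q : E × (Fin m → ℝ × ℝ) => α q.1)
      ((fderiv ℝ α pz.1).comp (ContinuousLinearMap.fst ℝ E (Fin m → ℝ × ℝ))) pz :=
    ((hα pz.1).hasFDerivAt).comp pz (hasFDerivAt_fst)
  have h2 := (((compL ℝ (E × (Fin m → ℝ × ℝ)) E ℝ).flip
      (ContinuousLinearMap.fst ℝ E (Fin m → ℝ × ℝ))).hasFDerivAt).comp pz h1
  have h3 := ((Phi15 E m).comp (ContinuousLinearMap.snd ℝ E (Fin m → ℝ × ℝ))).hasFDerivAt (x := pz)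
  exact h2.add h3

lemma beta15_fderiv_apply (m : ℕ) (α : E → E →L[ℝ] ℝ) (hα : Differentiable ℝ α)
    (pz v w : E × (Fin m → ℝ × ℝ)) :
    fderiv ℝ (beta15 m α) pz v w = fderiv ℝ α pz.1 v.1 w.1 + omega15 v.2 w.2 := by
  rw [(beta15_hasFDerivAt m α hα pz).fderiv]
  simp [Phi15, omega15, mul_comm]

lemma beta15_extDeriv (m : ℕ) (α : E → E →L[ℝ] ℝ) (hα : Differentiable ℝ α)
    (pz v w : E × (Fin m → ℝ × ℝ)) :
    extDeriv1 (beta15 m α) pz v w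
      = extDeriv1 α pz.1 v.1 w.1 + 2 * omega15 v.2 w.2 := by
  unfold extDeriv1
  rw [beta15_fderiv_apply m α hα, beta15_fderiv_apply m α hα,
    omega15_skew w.2 v.2]
  ring

end Aux15

/-- flat-chart model: if `α` is a contact form on the `(2n+1)`-dimensional
`E` and `m ≥ 1`, then `α_m = α + Σᵢ rᵢ² dθᵢ = α + Σᵢ (xᵢ dyᵢ − yᵢ dxᵢ)` is a contact form
on the `(2n+2m+1)`-dimensional `E × (ℝ²)^m`. -/
theorem stmt_15
    {E : Type*} [NormedAddCommGroup E] [NormedSpace ℝ E] [FiniteDimensional ℝ E]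
    (n : ℕ) (hdim : Module.finrank ℝ E = 2 * n + 1)
    (m : ℕ) (hm : 1 ≤ m)
    (α : E → E →L[ℝ] ℝ) (hα : ContDiff ℝ (⊤ : ℕ∞) α) (hcontact : IsContactForm1 α) :
    IsContactForm1 (fun pz : E × (Fin m → ℝ × ℝ) =>
      (α pz.1).comp (ContinuousLinearMap.fst ℝ E (Fin m → ℝ × ℝ))
      + ∑ i : Fin m,
          ((pz.2 i).1 • ((ContinuousLinearMap.snd ℝ ℝ ℝ).comp
              ((ContinuousLinearMap.proj i).comp
                (ContinuousLinearMap.snd ℝ E (Fin m → ℝ × ℝ))))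
          - (pz.2 i).2 • ((ContinuousLinearMap.fst ℝ ℝ ℝ).comp
              ((ContinuousLinearMap.proj i).comp
                (ContinuousLinearMap.snd ℝ E (Fin m → ℝ × ℝ)))))) := by
  have hda : Differentiable ℝ α := hα.differentiable (by simp)
  have hbeq : (fun pz : E × (Fin m → ℝ × ℝ) =>
      (α pz.1).comp (ContinuousLinearMap.fst ℝ E (Fin m → ℝ × ℝ))
      + ∑ i : Fin m,
          ((pz.2 i).1 • ((ContinuousLinearMap.snd ℝ ℝ ℝ).comp
              ((ContinuousLinearMap.proj i).comp
                (ContinuousLinearMap.snd ℝ E (Fin m → ℝ × ℝ))))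
          - (pz.2 i).2 • ((ContinuousLinearMap.fst ℝ ℝ ℝ).comp
              ((ContinuousLinearMap.proj i).comp
                (ContinuousLinearMap.snd ℝ E (Fin m → ℝ × ℝ)))))) = beta15 m α := by
    funext pz
    rw [beta15, Phi15_apply]
  rw [hbeq]
  intro pz
  obtain ⟨hne, hker⟩ := hcontact pz.1
  have hex0 : ∃ u0, α pz.1 u0 ≠ 0 := by
    by_contra hc
    push_neg at hc
    exact hne (ContinuousLinearMap.ext hc)
  constructor
  · -- β ≠ 0 at pz
    obtain ⟨u0, hu0⟩ := hex0
    intro h0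
    apply hu0
    have h1 : beta15 m α pz (u0, (0 : Fin m → ℝ × ℝ)) = 0 := by rw [h0]; rfl
    rw [beta15_apply] at h1
    simpa [omega15_zero_right] using h1
  · intro v hv hvne
    have hv' : α pz.1 v.1 + omega15 pz.2 v.2 = 0 := by
      rw [← beta15_apply m α pz v]; exact hv
    by_cases hcase : ∃ η, omega15 pz.2 η = 0 ∧ omega15 v.2 η ≠ 0
    · obtain ⟨η, hη0, hηv⟩ := hcase
      refine ⟨((0 : E), η), ?_, ?_⟩
      · rw [beta15_apply]; simpa using hη0
      · rw [beta15_extDeriv m α hda]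
        have h2 : extDeriv1 α pz.1 v.1 (0 : E) = 0 := by simp [extDeriv1]
        rw [h2, zero_add]
        exact mul_ne_zero two_ne_zero hηv
    · push_neg at hcase
      have hzv : omega15 pz.2 v.2 = 0 := by
        have hvz : omega15 v.2 pz.2 = 0 := hcase pz.2 (omega15_self pz.2)
        rw [omega15_skew v.2 pz.2, hvz, neg_zero]
      have hαu : α pz.1 v.1 = 0 := by rw [hzv] at hv'; linarith
      by_cases hu : v.1 = 0
      · have hζ : v.2 ≠ 0 := by
          intro h2
          exact hvne (Prod.ext hu h2)
        obtain ⟨η1, hη1⟩ := omega15_nondeg hζ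
        have hzη1 : omega15 pz.2 η1 ≠ 0 := fun h => hη1 (hcase η1 h)
        obtain ⟨u0, hu0⟩ := hex0
        refine ⟨(u0, (-(α pz.1 u0) / omega15 pz.2 η1) • η1), ?_, ?_⟩
        · rw [beta15_apply, omega15_smul]
          field_simp
          ring
        · rw [beta15_extDeriv m α hda]
          have h2 : extDeriv1 α pz.1 v.1 u0 = 0 := by simp [extDeriv1, hu]
          rw [h2, zero_add, omega15_smul]
          exact mul_ne_zero two_ne_zero
            (mul_ne_zero (div_ne_zero (neg_ne_zero.mpr hu0) hzη1) hη1)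
      · obtain ⟨w', hw1, hw2⟩ := hker v.1 hαu hu
        refine ⟨(w', (0 : Fin m → ℝ × ℝ)), ?_, ?_⟩
        · rw [beta15_apply]
          simp [hw1, omega15_zero_right]
        · rw [beta15_extDeriv m α hda]
          simpa [omega15_zero_right] using hw2
end
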